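/- The completion operation on bracket patterns is idempotent: for every bracket pattern w, A(A(w)) = A(w). -/
import Mathlib


/-- The frame of a bracket pattern: its maximum (sup). -/
def frame (w : Finset ℕ) : ℕ := w.sup id

/-- The dual of a bracket pattern: `w† = { ‖w‖ - i : i ∈ ℕ₀, i < ‖w‖, i ∉ w }`. -/
def dual (w : Finset ℕ) : Finset ℕ :=
  ((Finset.range (frame w)).filter (fun i => i ∉ w)).image (fun i => frame w - i)

/-- The completion of a bracket pattern: `A(w) = { j - i : j ∈ w, i ∈ ℕ₀, i ∉ w, i < j }`. -/
def completion (w : Finset ℕ) : Finset ℕ :=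
  w.biUnion (fun j => ((Finset.range j).filter (fun i => i ∉ w)).image (fun i => j - i))

/-- The `j`-projection of a bracket pattern: `∩_j w = { i ∈ w : i ≤ j }`. -/
def proj (j : ℕ) (w : Finset ℕ) : Finset ℕ := w.filter (fun i => i ≤ j)

/-- A bracket pattern is a nonempty finite subset of ℕ = {1,2,...}. -/
def IsBracketPattern (w : Finset ℕ) : Prop := w.Nonempty ∧ 0 ∉ w

lemma mem_completion {w : Finset ℕ} {m : ℕ} :
    m ∈ completion w ↔ ∃ j ∈ w, m ≤ j ∧ 0 < m ∧ j - m ∉ w := by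
  simp only [completion, Finset.mem_biUnion, Finset.mem_image, Finset.mem_filter,
    Finset.mem_range]
  constructor
  · rintro ⟨j, hj, i, ⟨hi, hiw⟩, rfl⟩
    refine ⟨j, hj, Nat.sub_le _ _, by omega, ?_⟩
    have : j - (j - i) = i := by omega
    rw [this]; exact hiw
  · rintro ⟨j, hj, hmj, hm, hjm⟩
    exact ⟨j, hj, j - m, ⟨by omega, hjm⟩, by omega⟩

theorem completion_idempotent (w : Finset ℕ) (hw : IsBracketPattern w) :
    completion (completion w) = completion w := by
  ext m
  rw [mem_completion]
  constructor
  · rintro ⟨k, hk, hmk, hm, hkm⟩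
    rcases Nat.eq_or_lt_of_le hmk with rfl | hlt
    · exact hk
    · rw [mem_completion] at hk
      obtain ⟨j, hj, hkj, hkpos, hjk⟩ := hk
      rw [mem_completion]
      refine ⟨j, hj, by omega, hm, fun hjm => ?_⟩
      apply hkm
      rw [mem_completion]
      refine ⟨j - m, hjm, by omega, by omega, ?_⟩
      have : j - m - (k - m) = j - k := by omega
      rw [this]; exact hjk
  · intro hm
    have hmpos : 0 < m := by
      rw [mem_completion] at hm; obtain ⟨_, _, _, h, _⟩ := hm; exact h
    refine ⟨m, hm, le_refl m, hmpos, ?_⟩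
    rw [mem_completion]
    rintro ⟨j, hj, hmj, h0, _⟩
    omega
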